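/- Fix τ with 0 < τ ≤ 1/2 and define Λ_τ(s) := (1−τ)^s·(2ζ(s,1) − ζ(s,2−τ) − ζ(s,1+τ)) for real s ≥ 3, where ζ(s,x) := ∑_{k=0}^{∞} (x+k)^{−s} is the Hurwitz zeta function. Then Λ_τ(s) > 0 for all s ∈ [3,∞), Λ_τ is strictly decreasing on [3,∞) (i.e. 3 ≤ s₁ < s₂ implies Λ_τ(s₂) < Λ_τ(s₁)), and Λ_τ(s) → 0 as s → +∞. -/

import Mathlib

open Set Filter

/-- The Hurwitz zeta function `ζ(s,x) = ∑_{k≥0} (x+k)^{-s}` for real `s` and `x > 0`. -/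
noncomputable def hurwitzZ (s x : ℝ) : ℝ := ∑' k : ℕ, ((x + (k : ℝ)) ^ s)⁻¹

/-- `Λ_τ(s) = (1-τ)^s (2ζ(s,1) - ζ(s,2-τ) - ζ(s,1+τ))`. -/
noncomputable def LamH (τ s : ℝ) : ℝ :=
  (1 - τ) ^ s * (2 * hurwitzZ s 1 - hurwitzZ s (2 - τ) - hurwitzZ s (1 + τ))

open Real

/-!
Write `u = 1 - τ`. Splitting off the first terms of `ζ(s,1)` and `ζ(s,1+τ)` gives
`Λ_τ(s) = (2 uˢ - (u/(1+τ))ˢ) - ∑ₖ Δₖ(s)`, where `Δₖ(s)` is the second difference of `y ↦ y⁻ˢ`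
at `(2+k)/u` with step `τ/u`. Positivity is the strict decrease of `ζ(s,x)` in `x`, and the limit
follows from `0 ≤ Λ_τ(s) ≤ 2 ζ(2,1) uˢ`.

For `s₁ < s₂` the main part drops by at least `2 (1 - u^(s₂-s₁)) u^s₁ (1 - (1+τ)^(-s₁))`. The drop
`Δₖ(s₁) - Δₖ(s₂)` is the second difference of `y^(-s₁) - y^(-s₂)`, so it is controlled by the
second derivative of that function; together with the concavity of `t ↦ 1 - e^(-t)` this bounds it
by the same factor `(1 - u^(s₂-s₁)) u^s₁` times `log (2k+5) / (k+3/2)⁵`. These weights sum to less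
than `0.244`, which is just small enough for the remainder to lose less than the main part.
-/

lemma summable_inv_add_rpow {s x : ℝ} (hs : 1 < s) (hx : 0 ≤ x) :
    Summable fun k : ℕ => ((x + k) ^ s)⁻¹ :=
  ((summable_one_div_nat_add_rpow x s).2 hs).congr fun k => by
    rw [one_div, abs_of_nonneg (by positivity), add_comm]

lemma hurwitzZ_nonneg (s : ℝ) {x : ℝ} (hx : 0 ≤ x) : 0 ≤ hurwitzZ s x :=
  tsum_nonneg fun _ => inv_nonneg.2 (rpow_nonneg (by positivity) _)

lemma hurwitzZ_lt_hurwitzZ {s x y : ℝ} (hs : 1 < s) (hx : 0 < x) (hxy : x < y) :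
    hurwitzZ s y < hurwitzZ s x := by
  refine Summable.tsum_lt_tsum (i := 0) (fun k => ?_) ?_
    (summable_inv_add_rpow hs (by linarith)) (summable_inv_add_rpow hs hx.le)
  · exact inv_anti₀ (by positivity) (rpow_le_rpow (by positivity) (by linarith) (by linarith))
  · simpa using inv_strictAnti₀ (rpow_pos_of_pos hx s) (rpow_lt_rpow hx.le hxy (by linarith))

lemma hurwitzZ_le_hurwitzZ_of_le {s t x : ℝ} (hs : 1 < s) (hst : s ≤ t) (hx : 1 ≤ x) :
    hurwitzZ t x ≤ hurwitzZ s x :=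
  Summable.tsum_le_tsum
    (fun k => inv_anti₀ (by positivity)
      (rpow_le_rpow_of_exponent_le (le_add_of_le_of_nonneg hx k.cast_nonneg) hst))
    (summable_inv_add_rpow (hs.trans_le hst) (by linarith)) (summable_inv_add_rpow hs (by linarith))

lemma hurwitzZ_eq_inv_rpow_add {s x : ℝ} (hs : 1 < s) (hx : 0 ≤ x) :
    hurwitzZ s x = (x ^ s)⁻¹ + hurwitzZ s (x + 1) := by
  rw [hurwitzZ, (summable_inv_add_rpow hs hx).tsum_eq_zero_add, hurwitzZ]
  simp only [Nat.cast_zero, add_zero, Nat.cast_succ, add_assoc, add_comm (1 : ℝ)]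

lemma hasSum_div_rpow_neg {s x u : ℝ} (hs : 1 < s) (hx : 0 ≤ x) (hu : 0 < u) :
    HasSum (fun k : ℕ => ((x + k) / u) ^ (-s)) (u ^ s * hurwitzZ s x) := by
  have h : (fun k : ℕ => ((x + k) / u) ^ (-s)) = fun k : ℕ => u ^ s * ((x + k) ^ s)⁻¹ := by
    ext k
    rw [div_rpow (by positivity) hu.le, rpow_neg (by positivity), rpow_neg hu.le, div_inv_eq_mul,
      mul_comm]
  rw [h]
  exact (summable_inv_add_rpow hs hx).hasSum.mul_left _

lemma LamH_pos {τ s : ℝ} (hτ0 : 0 < τ) (hτ1 : τ < 1) (hs : 1 < s) : 0 < LamH τ s := by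
  have h1 := hurwitzZ_lt_hurwitzZ hs one_pos (show 1 < 2 - τ by linarith)
  have h2 := hurwitzZ_lt_hurwitzZ hs one_pos (show 1 < 1 + τ by linarith)
  exact mul_pos (rpow_pos_of_pos (by linarith) s) (by linarith)

lemma LamH_le_mul_rpow {τ s : ℝ} (hτ0 : 0 ≤ τ) (hτ1 : τ < 1) (hs : 2 ≤ s) :
    LamH τ s ≤ 2 * hurwitzZ 2 1 * (1 - τ) ^ s := by
  have h1 := hurwitzZ_le_hurwitzZ_of_le one_lt_two hs le_rfl
  have h2 := hurwitzZ_nonneg s (show 0 ≤ 2 - τ by linarith)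
  have h3 := hurwitzZ_nonneg s (show 0 ≤ 1 + τ by linarith)
  rw [LamH, mul_comm]
  exact mul_le_mul_of_nonneg_right (by linarith) (rpow_nonneg (by linarith) s)

lemma tendsto_LamH_atTop {τ : ℝ} (hτ0 : 0 < τ) (hτ1 : τ < 1) :
    Tendsto (LamH τ) atTop (nhds 0) := by
  have hu := (tendsto_rpow_atTop_of_base_lt_one (1 - τ) (by linarith) (by linarith)).const_mul
    (2 * hurwitzZ 2 1)
  rw [mul_zero] at hu
  refine tendsto_of_tendsto_of_tendsto_of_le_of_le' tendsto_const_nhds hu ?_ ?_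
  · filter_upwards [eventually_gt_atTop 1] with s hs using (LamH_pos hτ0 hτ1 hs).le
  · filter_upwards [eventually_ge_atTop 2] with s hs using LamH_le_mul_rpow hτ0.le hτ1 hs

def secondDiff (f : ℝ → ℝ) (c δ : ℝ) : ℝ := f (c + δ) + f (c - δ) - 2 * f c

lemma secondDiff_sub (f g : ℝ → ℝ) (c δ : ℝ) :
    secondDiff f c δ - secondDiff g c δ = secondDiff (fun y => f y - g y) c δ := by
  unfold secondDiff
  ring

lemma secondDiff_le_mul_sq {f f' f'' : ℝ → ℝ} {c δ M : ℝ} (hδ : 0 ≤ δ)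
    (hf : ∀ y ∈ Icc (c - δ) (c + δ), HasDerivAt f (f' y) y)
    (hf' : ∀ y ∈ Icc (c - δ) (c + δ), HasDerivAt f' (f'' y) y)
    (hM : ∀ y ∈ Icc (c - δ) (c + δ), f'' y ≤ M) :
    secondDiff f c δ ≤ M * δ ^ 2 := by
  have hg : ∀ y ∈ Icc (c - δ) (c + δ),
      HasDerivAt (fun y => M / 2 * y ^ 2 - f y) (M * y - f' y) y := fun y hy =>
    (((hasDerivAt_pow 2 y).const_mul (M / 2)).sub (hf y hy)).congr_deriv (by ring)
  -- `M y² / 2 - f` is convex, so its second difference is nonnegative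
  have hconv : ConvexOn ℝ (Icc (c - δ) (c + δ)) fun y => M / 2 * y ^ 2 - f y := by
    refine convexOn_of_hasDerivWithinAt2_nonneg (f' := fun y => M * y - f' y)
      (f'' := fun y => M - f'' y) (convex_Icc _ _)
      (fun y hy => (hg y hy).continuousAt.continuousWithinAt) (fun y hy => ?_)
      (fun y hy => ?_) (fun y hy => ?_) <;>
    rw [interior_Icc] at hy <;> replace hy := Ioo_subset_Icc_self hy
    · exact (hg y hy).hasDerivWithinAt
    · exact ((((hasDerivAt_id' y).const_mul M).sub (hf' y hy)).congr_deriv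
        (by ring)).hasDerivWithinAt
    · linarith [hM y hy]
  have hmid := hconv.2 (left_mem_Icc.2 (by linarith)) (right_mem_Icc.2 (by linarith))
    (by norm_num : (0 : ℝ) ≤ 1 / 2) (by norm_num : (0 : ℝ) ≤ 1 / 2) (by norm_num)
  simp only [smul_eq_mul, show 1 / 2 * (c - δ) + 1 / 2 * (c + δ) = c by ring] at hmid
  unfold secondDiff
  linarith

lemma rpow_neg_sub_rpow_neg_deriv2_le {s₁ s₂ y : ℝ} (hs₁ : 0 ≤ s₁) (hs : s₁ ≤ s₂) (hy : 1 ≤ y) :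
    s₁ * (s₁ + 1) * y ^ (-s₁ - 2) - s₂ * (s₂ + 1) * y ^ (-s₂ - 2) ≤
      s₁ * (s₁ + 1) * y ^ (-s₁ - 2) * (1 - y ^ (s₁ - s₂)) := by
  have hsplit : y ^ (-s₂ - 2) = y ^ (-s₁ - 2) * y ^ (s₁ - s₂) := by
    rw [← rpow_add (by linarith)]
    congr 1
    ring
  have hpos : 0 ≤ y ^ (-s₁ - 2) * y ^ (s₁ - s₂) := by positivity
  have hcoeff : s₁ * (s₁ + 1) ≤ s₂ * (s₂ + 1) := by nlinarith
  rw [hsplit]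
  nlinarith [mul_le_mul_of_nonneg_right hcoeff hpos]

lemma secondDiff_rpow_neg_sub_rpow_neg_le {s₁ s₂ c δ : ℝ} (hs₁ : 0 ≤ s₁) (hs : s₁ ≤ s₂)
    (hδ : 0 ≤ δ) (hcδ : 1 ≤ c - δ) :
    secondDiff (fun y => y ^ (-s₁) - y ^ (-s₂)) c δ ≤
      s₁ * (s₁ + 1) * (c - δ) ^ (-s₁ - 2) * (1 - (c + δ) ^ (s₁ - s₂)) * δ ^ 2 := by
  have hne : ∀ y ∈ Icc (c - δ) (c + δ), y ≠ 0 := fun y hy => by linarith [hy.1]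
  refine secondDiff_le_mul_sq hδ (f' := fun y => -s₁ * y ^ (-s₁ - 1) - -s₂ * y ^ (-s₂ - 1))
    (f'' := fun y => s₁ * (s₁ + 1) * y ^ (-s₁ - 2) - s₂ * (s₂ + 1) * y ^ (-s₂ - 2))
    (fun y hy => ?_) (fun y hy => ?_) (fun y hy => ?_)
  · exact (hasDerivAt_rpow_const (Or.inl (hne y hy))).sub
      (hasDerivAt_rpow_const (Or.inl (hne y hy)))
  · refine (((hasDerivAt_rpow_const (Or.inl (hne y hy))).const_mul (-s₁)).sub
      ((hasDerivAt_rpow_const (Or.inl (hne y hy))).const_mul (-s₂))).congr_deriv ?_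
    rw [show -s₁ - 1 - 1 = -s₁ - 2 by ring, show -s₂ - 1 - 1 = -s₂ - 2 by ring]
    ring
  · have hy1 : 1 ≤ y := hcδ.trans hy.1
    have hy0 : 0 < y := by linarith
    have h1 : y ^ (-s₁ - 2) ≤ (c - δ) ^ (-s₁ - 2) :=
      rpow_le_rpow_of_nonpos (by linarith) hy.1 (by linarith)
    have h2 : (c + δ) ^ (s₁ - s₂) ≤ y ^ (s₁ - s₂) :=
      rpow_le_rpow_of_nonpos hy0 hy.2 (by linarith)
    have h3 : y ^ (s₁ - s₂) ≤ 1 := rpow_le_one_of_one_le_of_nonpos hy1 (by linarith)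
    refine (rpow_neg_sub_rpow_neg_deriv2_le hs₁ hs hy1).trans ?_
    gcongr ?_ * ?_
    · exact mul_le_mul_of_nonneg_left h1 (by positivity)
    · linarith

lemma log_mul_one_sub_rpow_neg_le {A B Δ : ℝ} (hA : 1 < A) (hAB : A ≤ B) :
    log A * (1 - B ^ (-Δ)) ≤ log B * (1 - A ^ (-Δ)) := by
  -- `t ↦ (1 - exp (-Δ t)) / t` is antitone, being minus the slope of a convex function at `0`
  have hconv : ConvexOn ℝ univ fun t => exp (-Δ * t) :=
    convexOn_exp.comp_linearMap (LinearMap.mul ℝ ℝ (-Δ))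
  have hA0 : 0 < log A := log_pos hA
  have hB0 : 0 < log B := log_pos (hA.trans_le hAB)
  have h := hconv.secant_mono (mem_univ 0) (mem_univ (log A)) (mem_univ (log B)) hA0.ne' hB0.ne'
    (log_le_log (by linarith) hAB)
  simp only [sub_zero, mul_zero, exp_zero] at h
  rw [div_le_div_iff₀ hA0 hB0] at h
  rw [rpow_def_of_pos (by linarith), rpow_def_of_pos (by linarith), mul_comm (log A) (-Δ),
    mul_comm (log B) (-Δ)]
  linarith

noncomputable def LamHMain (τ s : ℝ) : ℝ := 2 * (1 - τ) ^ s - ((1 - τ) / (1 + τ)) ^ s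

lemma hasSum_secondDiff_rpow_neg {τ s : ℝ} (hτ0 : 0 ≤ τ) (hτ1 : τ < 1) (hs : 1 < s) :
    HasSum (fun k : ℕ => secondDiff (fun y => y ^ (-s)) ((2 + k) / (1 - τ)) (τ / (1 - τ)))
      (LamHMain τ s - LamH τ s) := by
  have hu : 0 < 1 - τ := by linarith
  have h1 := hurwitzZ_eq_inv_rpow_add hs zero_le_one
  have h2 := hurwitzZ_eq_inv_rpow_add hs (show 0 ≤ 1 + τ by linarith)
  rw [one_rpow, inv_one, one_add_one_eq_two] at h1
  rw [show 1 + τ + 1 = 2 + τ by ring] at h2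
  have hvalue : LamHMain τ s - LamH τ s =
      (1 - τ) ^ s * hurwitzZ s (2 + τ) + (1 - τ) ^ s * hurwitzZ s (2 - τ)
        - 2 * ((1 - τ) ^ s * hurwitzZ s 2) := by
    unfold LamHMain LamH
    rw [h1, h2, div_rpow hu.le (by linarith), div_eq_mul_inv]
    ring
  have hterm : (fun k : ℕ => secondDiff (fun y => y ^ (-s)) ((2 + k) / (1 - τ)) (τ / (1 - τ))) =
      fun k : ℕ => ((2 + τ + k) / (1 - τ)) ^ (-s) + ((2 - τ + k) / (1 - τ)) ^ (-s)
        - 2 * ((2 + k) / (1 - τ)) ^ (-s) := by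
    ext k
    unfold secondDiff
    ring_nf
  rw [hterm, hvalue]
  exact ((hasSum_div_rpow_neg hs (by linarith) hu).add
    (hasSum_div_rpow_neg hs (by linarith) hu)).sub ((hasSum_div_rpow_neg hs zero_le_two hu).mul_left 2)

lemma mul_le_LamHMain_sub {τ s₁ s₂ : ℝ} (hτ0 : 0 ≤ τ) (hτ1 : τ < 1) (hs : s₁ ≤ s₂) :
    2 * (1 - (1 - τ) ^ (s₂ - s₁)) * (1 - τ) ^ s₁ * (1 - (1 + τ) ^ (-s₁)) ≤
      LamHMain τ s₁ - LamHMain τ s₂ := by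
  have hu : 0 < 1 - τ := by linarith
  have hw : 0 < (1 - τ) / (1 + τ) := by positivity
  have hΔ : 0 ≤ s₂ - s₁ := by linarith
  -- with `q = (1 - τ) ^ (s₂ - s₁)`, the `(1 + τ)`-term decays at least like `q ^ 2`,
  -- and `1 - q ^ 2 ≤ 2 (1 - q)`
  have hwq : ((1 - τ) ^ (s₂ - s₁)) ^ 2 ≤ ((1 - τ) / (1 + τ)) ^ (s₂ - s₁) := by
    rw [← rpow_natCast, ← rpow_mul hu.le, mul_comm, rpow_mul hu.le, rpow_natCast]
    refine rpow_le_rpow (by positivity) ?_ hΔ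
    rw [le_div_iff₀ (by linarith)]
    nlinarith [mul_nonneg hu.le (sq_nonneg τ)]
  have hsplit : ∀ x : ℝ, 0 < x → x ^ s₂ = x ^ s₁ * x ^ (s₂ - s₁) := fun x hx => by
    rw [← rpow_add hx, add_sub_cancel]
  rw [LamHMain, LamHMain, hsplit _ hu, hsplit _ hw, div_rpow hu.le (by linarith),
    div_eq_mul_inv (_ ^ s₁), ← rpow_neg (by linarith)]
  have hB : 0 ≤ (1 - τ) ^ s₁ * (1 + τ) ^ (-s₁) := by positivity
  nlinarith [mul_le_mul_of_nonneg_left hwq hB, mul_nonneg hB (sq_nonneg (1 - (1 - τ) ^ (s₂ - s₁)))]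

lemma rpow_neg_sub_two_le {x s : ℝ} (hx : 3 / 2 ≤ x) (hs : 3 ≤ s) :
    x ^ (-s - 2) ≤ (3 / 2) ^ (3 - s) / x ^ 5 := by
  have hx0 : 0 < x := by linarith
  rw [show -s - 2 = (3 - s) + -((5 : ℕ) : ℝ) by push_cast; ring, rpow_add hx0, rpow_neg hx0.le,
    rpow_natCast, ← div_eq_mul_inv]
  exact div_le_div_of_nonneg_right (rpow_le_rpow_of_nonpos (by norm_num) hx (by linarith))
    (by positivity)

lemma shifted_rpow_neg_sub_two_le {τ s : ℝ} (hτ : τ ≤ 1 / 2) (hs : 3 ≤ s) (k : ℕ) :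
    ((2 - τ + k) / (1 - τ)) ^ (-s - 2) ≤
      (1 - τ) ^ (s + 2) * ((3 / 2) ^ (3 - s) / (k + 3 / 2) ^ 5) := by
  have hu : 0 < 1 - τ := by linarith
  have hk : (3 / 2 : ℝ) ≤ k + 3 / 2 := by linarith [k.cast_nonneg (α := ℝ)]
  have hx : (k : ℝ) + 3 / 2 ≤ 2 - τ + k := by linarith
  rw [div_rpow (by linarith) hu.le, div_eq_mul_inv, ← rpow_neg hu.le,
    show -(-s - 2) = s + 2 by ring, mul_comm]
  exact mul_le_mul_of_nonneg_left ((rpow_le_rpow_of_nonpos (by linarith) hx (by linarith)).trans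
    (rpow_neg_sub_two_le hk hs)) (by positivity)

lemma neg_log_mul_one_sub_rpow_le {τ s₁ s₂ : ℝ} (hτ0 : 0 < τ) (hτ : τ ≤ 1 / 2) (hs : s₁ ≤ s₂)
    (k : ℕ) :
    -log (1 - τ) * (1 - ((2 + τ + k) / (1 - τ)) ^ (s₁ - s₂)) ≤
      log (2 * k + 5) * (1 - (1 - τ) ^ (s₂ - s₁)) := by
  have hu : 0 < 1 - τ := by linarith
  have hA : 1 < (1 - τ)⁻¹ := (one_lt_inv₀ hu).2 (by linarith)
  have hAB : (1 - τ)⁻¹ ≤ (2 + τ + k) / (1 - τ) := by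
    rw [inv_eq_one_div]
    exact div_le_div_of_nonneg_right (by linarith) hu.le
  have hB : (2 + τ + k) / (1 - τ) ≤ 2 * k + 5 := by
    rw [div_le_iff₀ hu]
    nlinarith
  have h := log_mul_one_sub_rpow_neg_le (Δ := s₂ - s₁) hA hAB
  rw [log_inv, inv_rpow hu.le, rpow_neg hu.le, inv_inv, neg_sub] at h
  refine h.trans (mul_le_mul_of_nonneg_right (log_le_log (by linarith) hB) ?_)
  linarith [rpow_le_one hu.le (by linarith : 1 - τ ≤ 1) (by linarith : 0 ≤ s₂ - s₁)]

noncomputable def tailWeight (k : ℕ) : ℝ := log (2 * k + 5) / ((k : ℝ) + 3 / 2) ^ 5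

lemma secondDiff_le_mul_tailWeight {τ s₁ s₂ : ℝ} (hτ0 : 0 < τ) (hτ : τ ≤ 1 / 2) (hs₁ : 3 ≤ s₁)
    (hs : s₁ ≤ s₂) (k : ℕ) :
    secondDiff (fun y => y ^ (-s₁) - y ^ (-s₂)) ((2 + k) / (1 - τ)) (τ / (1 - τ)) ≤
      (1 - (1 - τ) ^ (s₂ - s₁)) * (1 - τ) ^ s₁ *
        (τ ^ 2 * (s₁ * (s₁ + 1)) * (3 / 2) ^ (3 - s₁) / -log (1 - τ)) * tailWeight k := by
  have hu : 0 < 1 - τ := by linarith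
  have hlog : 0 < -log (1 - τ) := neg_pos.2 (log_neg hu (by linarith))
  have hsub : (2 + k) / (1 - τ) - τ / (1 - τ) = (2 - τ + k) / (1 - τ) := by ring
  have hadd : (2 + k) / (1 - τ) + τ / (1 - τ) = (2 + τ + k) / (1 - τ) := by ring
  have hbase : 1 ≤ (2 - τ + k) / (1 - τ) := by
    rw [le_div_iff₀ hu]
    linarith
  have hcurv := secondDiff_rpow_neg_sub_rpow_neg_le (by linarith) hs (by positivity)
    (hsub ▸ hbase)
  rw [hsub, hadd] at hcurv
  have hratio : 1 - ((2 + τ + k) / (1 - τ)) ^ (s₁ - s₂) ≤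
      log (2 * k + 5) * (1 - (1 - τ) ^ (s₂ - s₁)) / -log (1 - τ) := by
    rw [le_div_iff₀ hlog, mul_comm]
    exact neg_log_mul_one_sub_rpow_le hτ0 hτ hs k
  refine hcurv.trans ?_
  calc _ ≤ s₁ * (s₁ + 1) * ((1 - τ) ^ (s₁ + 2) * ((3 / 2) ^ (3 - s₁) / (k + 3 / 2) ^ 5)) *
        (log (2 * k + 5) * (1 - (1 - τ) ^ (s₂ - s₁)) / -log (1 - τ)) * (τ / (1 - τ)) ^ 2 := by
        have hpow := shifted_rpow_neg_sub_two_le hτ hs₁ k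
        have hnonneg : 0 ≤ 1 - ((2 + τ + k) / (1 - τ)) ^ (s₁ - s₂) :=
          sub_nonneg.2 (rpow_le_one_of_one_le_of_nonpos
            (hbase.trans (div_le_div_of_nonneg_right (by linarith) hu.le)) (by linarith))
        gcongr
    _ = _ := by
        rw [tailWeight, rpow_add hu, rpow_two]
        field_simp

lemma sum_range_pow_div_le_neg_log_one_sub {x : ℝ} (hx0 : 0 ≤ x) (hx1 : x < 1) (n : ℕ) :
    ∑ i ∈ Finset.range n, x ^ (i + 1) / (i + 1) ≤ -log (1 - x) :=
  sum_le_hasSum _ (fun _ _ => by positivity)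
    (hasSum_pow_div_log_of_abs_lt_one (by rwa [abs_of_nonneg hx0]))

lemma add_sq_div_two_le_neg_log_one_sub {x : ℝ} (hx0 : 0 ≤ x) (hx1 : x < 1) :
    x + x ^ 2 / 2 ≤ -log (1 - x) := by
  have h := sum_range_pow_div_le_neg_log_one_sub hx0 hx1 2
  norm_num [Finset.sum_range_succ] at h
  exact h

lemma le_log_three_halves : (0.4 : ℝ) ≤ log (3 / 2) := by
  have h := sum_range_pow_div_le_neg_log_one_sub (x := 1 / 3) (by norm_num) (by norm_num) 3
  rw [← log_inv] at h
  norm_num [Finset.sum_range_succ] at h ⊢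
  linarith

lemma cubic_le_three_halves_rpow {t : ℝ} (ht : 0 ≤ t) :
    1 + 0.4 * t + (0.4 * t) ^ 2 / 2 + (0.4 * t) ^ 3 / 6 ≤ (3 / 2 : ℝ) ^ t := by
  have hexp : 1 + 0.4 * t + (0.4 * t) ^ 2 / 2 + (0.4 * t) ^ 3 / 6 ≤ exp (0.4 * t) := by
    have h := sum_le_exp_of_nonneg (show 0 ≤ 0.4 * t by positivity) 4
    norm_num [Finset.sum_range_succ, Nat.factorial] at h ⊢
    linarith
  rw [rpow_def_of_pos (by norm_num)]
  exact hexp.trans (exp_le_exp.2 (by nlinarith [le_log_three_halves]))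

lemma add_one_mul_three_halves_rpow_le {s : ℝ} (hs : 3 ≤ s) :
    (s + 1) * (3 / 2 : ℝ) ^ (3 - s) ≤ 4 := by
  have h := cubic_le_three_halves_rpow (show 0 ≤ s - 3 by linarith)
  rw [show 3 - s = -(s - 3) by ring, rpow_neg (by norm_num), ← div_eq_mul_inv,
    div_le_iff₀ (by positivity)]
  nlinarith [sq_nonneg (s - 3)]

lemma add_one_mul_add_two_mul_three_halves_rpow_le {s : ℝ} (hs : 3 ≤ s) :
    (s + 1) * (s + 2) * (3 / 2 : ℝ) ^ (3 - s) ≤ 20.3 := by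
  have h := cubic_le_three_halves_rpow (show 0 ≤ s - 3 by linarith)
  rw [show 3 - s = -(s - 3) by ring, rpow_neg (by norm_num), ← div_eq_mul_inv,
    div_le_iff₀ (by positivity)]
  nlinarith [sq_nonneg (s - 3.7), mul_nonneg (show 0 ≤ s - 3 by linarith) (sq_nonneg (s - 3.7))]

lemma tailWeight_nonneg (k : ℕ) : 0 ≤ tailWeight k :=
  div_nonneg (log_nonneg (by linarith [k.cast_nonneg (α := ℝ)])) (by positivity)

lemma log_le_nat_mul_log_two_add {x : ℝ} (hx : 0 < x) (n : ℕ) :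
    log x ≤ n * log 2 + (x / 2 ^ n - 1) := by
  have h := log_le_sub_one_of_pos (show 0 < x / 2 ^ n by positivity)
  rw [log_div hx.ne' (by positivity), log_pow] at h
  linarith

lemma sum_range_six_tailWeight_le : ∑ k ∈ Finset.range 6, tailWeight k ≤ 0.2418 := by
  have h2 := log_two_lt_d9.le
  have h5 := log_le_nat_mul_log_two_add (show (0 : ℝ) < 5 by norm_num) 2
  have h7 := log_le_nat_mul_log_two_add (show (0 : ℝ) < 7 by norm_num) 3
  have h9 := log_le_nat_mul_log_two_add (show (0 : ℝ) < 9 by norm_num) 3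
  have h11 := log_le_nat_mul_log_two_add (show (0 : ℝ) < 11 by norm_num) 3
  have h13 := log_le_nat_mul_log_two_add (show (0 : ℝ) < 13 by norm_num) 4
  have h15 := log_le_nat_mul_log_two_add (show (0 : ℝ) < 15 by norm_num) 4
  simp only [Finset.sum_range_succ, Finset.sum_range_zero, tailWeight]
  norm_num at h5 h7 h9 h11 h13 h15 ⊢
  linarith

lemma sum_range_inv_mul_add_one_le {a : ℝ} (ha : 0 < a) (n : ℕ) :
    ∑ i ∈ Finset.range n, ((i + a) * (i + a + 1))⁻¹ ≤ a⁻¹ := by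
  have hterm : ∀ i : ℕ, ((i + a) * (i + a + 1))⁻¹ = (i + a)⁻¹ - ((i + 1 : ℕ) + a)⁻¹ := by
    intro i
    push_cast
    field_simp
    ring
  simp only [hterm, Finset.sum_range_sub' (fun i : ℕ => ((i : ℝ) + a)⁻¹), Nat.cast_zero, zero_add]
  linarith [inv_nonneg.2 (show 0 ≤ (n : ℝ) + a by positivity)]

lemma tailWeight_add_six_le (k : ℕ) :
    tailWeight (k + 6) ≤ 272 / 18225 * (((k : ℝ) + 7) * (k + 7 + 1))⁻¹ := by
  have hlog : log (2 * k + 17) ≤ (2 * (k : ℝ) + 17) / (27 / 10) := by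
    have h := log_le_sub_one_of_pos (show 0 < (2 * (k : ℝ) + 17) / (27 / 10) by positivity)
    rw [log_div (by positivity) (by norm_num)] at h
    linarith [show log (27 / 10) ≤ 1 by
      rw [log_le_iff_le_exp (by norm_num)]; linarith [exp_one_gt_d9]]
  rw [tailWeight, div_le_iff₀ (by positivity)]
  push_cast
  rw [show 2 * ((k : ℝ) + 6) + 5 = 2 * k + 17 by ring]
  refine hlog.trans ?_
  rw [← div_eq_mul_inv, div_mul_eq_mul_div, le_div_iff₀ (by positivity)]
  have h1 : 2 * (k : ℝ) + 17 ≤ 34 / 15 * (k + 6 + 3 / 2) := by linarith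
  have hx : 225 / 4 ≤ ((k : ℝ) + 6 + 3 / 2) ^ 2 := by nlinarith
  have h2 : ((k : ℝ) + 7) * (k + 7 + 1) ≤ 4 / 225 * (k + 6 + 3 / 2) ^ 4 := by
    nlinarith [mul_nonneg (sq_nonneg ((k : ℝ) + 6 + 3 / 2)) (sub_nonneg.2 hx)]
  linarith [mul_le_mul h1 h2 (by positivity) (by positivity)]

lemma sum_range_tailWeight_add_six_le (n : ℕ) :
    ∑ i ∈ Finset.range n, tailWeight (i + 6) ≤ 272 / 18225 * 7⁻¹ :=
  (Finset.sum_le_sum fun i _ => tailWeight_add_six_le i).trans <| by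
    rw [← Finset.mul_sum]
    gcongr
    exact_mod_cast sum_range_inv_mul_add_one_le (by norm_num : (0 : ℝ) < 7) n

lemma summable_tailWeight : Summable tailWeight :=
  (summable_nat_add_iff 6).1 <|
    summable_of_sum_range_le (fun _ => tailWeight_nonneg _) sum_range_tailWeight_add_six_le

lemma tsum_tailWeight_le : ∑' k, tailWeight k ≤ 0.244 := by
  rw [← summable_tailWeight.sum_add_tsum_nat_add 6]
  linarith [sum_range_six_tailWeight_le,
    Real.tsum_le_of_sum_range_le (fun _ => tailWeight_nonneg _) sum_range_tailWeight_add_six_le]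

lemma coeff_mul_tsum_tailWeight_lt {τ s : ℝ} (hτ0 : 0 < τ) (hτ : τ ≤ 1 / 2) (hs : 3 ≤ s) :
    τ ^ 2 * (s * (s + 1)) * (3 / 2) ^ (3 - s) / -log (1 - τ) * ∑' k, tailWeight k <
      2 * (1 - (1 + τ) ^ (-s)) := by
  set E : ℝ := (3 / 2) ^ (3 - s)
  set S := ∑' k, tailWeight k
  have hS0 : 0 ≤ S := tsum_nonneg tailWeight_nonneg
  have hS := tsum_tailWeight_le
  have hE₁ := add_one_mul_three_halves_rpow_le hs
  have hE₂ := add_one_mul_add_two_mul_three_halves_rpow_le hs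
  have hlog := add_sq_div_two_le_neg_log_one_sub hτ0.le (by linarith)
  have hbern : (1 + τ) ^ (-s) ≤ (1 + s * τ)⁻¹ := by
    rw [rpow_neg (by linarith)]
    exact inv_anti₀ (by positivity) (one_add_mul_self_le_rpow_one_add (by linarith) (by linarith))
  -- split `1 + sτ = (1 - 2τ) + τ (s + 2)` to use both growth bounds
  have hgrowth : (s + 1) * E * (1 + s * τ) ≤ 4 + 12.3 * τ := by
    nlinarith [mul_le_mul_of_nonneg_left hE₁ (show 0 ≤ 1 - 2 * τ by linarith)]
  have hcore : S * ((s + 1) * E * (1 + s * τ)) < 2 + τ := by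
    nlinarith [mul_le_mul hS hgrowth (by positivity) (by norm_num)]
  calc τ ^ 2 * (s * (s + 1)) * E / -log (1 - τ) * S
      ≤ τ ^ 2 * (s * (s + 1)) * E * S / (τ + τ ^ 2 / 2) := by
        rw [div_mul_eq_mul_div]
        exact div_le_div_of_nonneg_left (by positivity) (by positivity) hlog
    _ < 2 * (1 - (1 + s * τ)⁻¹) := by
        have hfrac : 1 - (1 + s * τ)⁻¹ = s * τ / (1 + s * τ) := by field_simp; ring
        rw [div_lt_iff₀ (by positivity), hfrac, mul_div_assoc', div_mul_eq_mul_div,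
          lt_div_iff₀ (by positivity)]
        nlinarith [mul_lt_mul_of_pos_left hcore (show 0 < s * τ ^ 2 by positivity)]
    _ ≤ 2 * (1 - (1 + τ) ^ (-s)) := by linarith

lemma LamH_lt_LamH {τ s₁ s₂ : ℝ} (hτ0 : 0 < τ) (hτ : τ ≤ 1 / 2) (hs₁ : 3 ≤ s₁)
    (hs : s₁ < s₂) : LamH τ s₂ < LamH τ s₁ := by
  have hK : 0 < (1 - (1 - τ) ^ (s₂ - s₁)) * (1 - τ) ^ s₁ :=
    mul_pos (sub_pos.2 (rpow_lt_one (by linarith) (by linarith) (by linarith)))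
      (rpow_pos_of_pos (by linarith) _)
  have hremainder := hasSum_le (fun k => (secondDiff_sub _ _ _ _).trans_le
      (secondDiff_le_mul_tailWeight hτ0 hτ hs₁ hs.le k))
    ((hasSum_secondDiff_rpow_neg hτ0.le (by linarith) (by linarith)).sub
      (hasSum_secondDiff_rpow_neg hτ0.le (by linarith) (by linarith)))
    (summable_tailWeight.hasSum.mul_left _)
  have hcoeff := mul_lt_mul_of_pos_left (coeff_mul_tsum_tailWeight_lt hτ0 hτ hs₁) hK
  have hmain := mul_le_LamHMain_sub hτ0.le (by linarith) hs.le
  linarith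

/-- For `0 < τ ≤ 1/2`, the function `Λ_τ` is positive and strictly decreasing on `[3,∞)`
and tends to `0` at `+∞`. -/
theorem LamH_pos_strictAnti_tendsto_zero (τ : ℝ) (hτ0 : 0 < τ) (hτ : τ ≤ 1 / 2) :
    (∀ s : ℝ, 3 ≤ s → 0 < LamH τ s) ∧
    (∀ s₁ s₂ : ℝ, 3 ≤ s₁ → s₁ < s₂ → LamH τ s₂ < LamH τ s₁) ∧
    Tendsto (fun s : ℝ => LamH τ s) atTop (nhds 0) :=
  ⟨fun _ hs => LamH_pos hτ0 (by linarith) (by linarith),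
    fun _ _ hs₁ hs => LamH_lt_LamH hτ0 hτ hs₁ hs, tendsto_LamH_atTop hτ0 (by linarith)⟩
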